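/- Let V be a maximal isotropic subspace with respect to ω, and let ψ₀ be a stabilizer state for V. Then for every (c,d) : (Fin p → ZMod 2) × (Fin p → ZMod 2), the inner product ⟪ψ₀, σ(c,d).mulVec ψ₀⟫ = ∑ x, conj(ψ₀ x) * (σ(c,d).mulVec ψ₀) x equals 0 if and only if (c,d) ∉ V. (Paper's Lemma 4: the state Sψ₀ is orthogonal to the stabilizer state ψ₀ iff the spinor S lies outside the Cartanion.) -/

import Mathlib

open Matrix BigOperators

/-- The mod-2 dot product of two bitstrings. -/
def dotp {p : ℕ} (a b : Fin p → ZMod 2) : ZMod 2 := ∑ i, a i * b i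

/-- The sign `(-1)^t` for `t : ZMod 2`. -/
noncomputable def sgn (t : ZMod 2) : ℂ := (-1 : ℂ) ^ t.val

/-- The Pauli spinor matrix `σ(a,b)`, representing `⊗ᵢ X^(a i) Z^(b i)`:
`σ(a,b) x y = (-1)^(b⬝x)` if `y = x + a` and `0` otherwise. -/
noncomputable def pauli {p : ℕ} (a b : Fin p → ZMod 2) :
    Matrix (Fin p → ZMod 2) (Fin p → ZMod 2) ℂ :=
  fun x y => if y = x + a then sgn (dotp b x) else 0

/-- The symplectic form `ω((a,b),(c,d)) = a⬝d + b⬝c` on pairs of bitstrings. -/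
def omegaF {p : ℕ} (u v : (Fin p → ZMod 2) × (Fin p → ZMod 2)) : ZMod 2 :=
  dotp u.1 v.2 + dotp u.2 v.1

/-- A subspace is isotropic if `ω` vanishes on all pairs of its elements. -/
def IsIsotropic {p : ℕ}
    (V : Submodule (ZMod 2) ((Fin p → ZMod 2) × (Fin p → ZMod 2))) : Prop :=
  ∀ u ∈ V, ∀ v ∈ V, omegaF u v = 0

/-- A maximal isotropic subspace: isotropic and not properly contained in any
isotropic subspace. -/
def IsMaxIsotropic {p : ℕ}
    (V : Submodule (ZMod 2) ((Fin p → ZMod 2) × (Fin p → ZMod 2))) : Prop :=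
  IsIsotropic V ∧ ∀ W, IsIsotropic W → V ≤ W → W = V

/-!
If `(c,d) ∈ V`, then `σ(c,d) ψ₀ = ψ₀` and the inner product is `‖ψ₀‖² ≠ 0`. Otherwise, by
maximality, some `u ∈ V` has `ω(u,(c,d)) = 1`: if not, `V + span {(c,d)}` would be isotropic.
Then `σ(u)` is unitary, fixes `ψ₀` and anticommutes with `σ(c,d)`, so conjugating by it shows
that the inner product equals its own negative.
-/

lemma sgn_add (s t : ZMod 2) : sgn (s + t) = sgn s * sgn t := by
  rw [sgn, sgn, sgn, ZMod.val_add, ← pow_add, neg_one_pow_eq_pow_mod_two (n := _ + _)]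

lemma sgn_one : sgn 1 = -1 := by
  simp [sgn, ZMod.val_one]

lemma sgn_mul_self (t : ZMod 2) : sgn t * sgn t = 1 := by
  rw [← sgn_add, CharTwo.add_self_eq_zero]; rfl

lemma star_sgn (t : ZMod 2) : star (sgn t) = sgn t := by
  simp [sgn]

lemma dotp_eq_dotProduct {p : ℕ} (a b : Fin p → ZMod 2) : dotp a b = a ⬝ᵥ b := rfl

theorem LinearMap.IsAlt.isotropic_sup_span_singleton {R M : Type*} [CommRing R]
    [AddCommGroup M] [Module R M] {B : M →ₗ[R] M →ₗ[R] R} (hB : B.IsAlt) {V : Submodule R M}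
    (hV : ∀ u ∈ V, ∀ v ∈ V, B u v = 0) {w : M} (hw : ∀ u ∈ V, B u w = 0) :
    ∀ u ∈ V ⊔ R ∙ w, ∀ v ∈ V ⊔ R ∙ w, B u v = 0 := by
  intro u hu v hv
  obtain ⟨u₀, hu₀, _, hs, rfl⟩ := Submodule.mem_sup.1 hu
  obtain ⟨v₀, hv₀, _, ht, rfl⟩ := Submodule.mem_sup.1 hv
  obtain ⟨s, rfl⟩ := Submodule.mem_span_singleton.1 hs
  obtain ⟨t, rfl⟩ := Submodule.mem_span_singleton.1 ht
  have hwv₀ : B w v₀ = 0 := by rw [← hB.neg v₀ w, hw v₀ hv₀, neg_zero]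
  simp [hV u₀ hu₀ v₀ hv₀, hw u₀ hu₀, hwv₀, hB.self_eq_zero w]

def omegaForm (p : ℕ) :
    LinearMap.BilinForm (ZMod 2) ((Fin p → ZMod 2) × (Fin p → ZMod 2)) :=
  LinearMap.mk₂ (ZMod 2) omegaF
    (fun u v w => by
      simp only [omegaF, dotp_eq_dotProduct, Prod.fst_add, Prod.snd_add, add_dotProduct]; ring)
    (fun t u w => by
      simp only [omegaF, dotp_eq_dotProduct, Prod.smul_fst, Prod.smul_snd, smul_dotProduct]; ring)
    (fun u v w => by
      simp only [omegaF, dotp_eq_dotProduct, Prod.fst_add, Prod.snd_add, dotProduct_add]; ring)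
    (fun t u w => by
      simp only [omegaF, dotp_eq_dotProduct, Prod.smul_fst, Prod.smul_snd, dotProduct_smul]; ring)

lemma omegaForm_apply {p : ℕ} (u v : (Fin p → ZMod 2) × (Fin p → ZMod 2)) :
    omegaForm p u v = omegaF u v := rfl

lemma isAlt_omegaForm (p : ℕ) : LinearMap.IsAlt (omegaForm p) := fun u => by
  rw [omegaForm_apply, omegaF, dotp_eq_dotProduct, dotp_eq_dotProduct, dotProduct_comm u.2,
    CharTwo.add_self_eq_zero]

lemma IsMaxIsotropic.exists_omegaF_eq_one {p : ℕ}
    {V : Submodule (ZMod 2) ((Fin p → ZMod 2) × (Fin p → ZMod 2))} (hV : IsMaxIsotropic V)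
    {w : (Fin p → ZMod 2) × (Fin p → ZMod 2)} (hw : w ∉ V) : ∃ u ∈ V, omegaF u w = 1 := by
  by_contra! h
  have hVw : ∀ u ∈ V, omegaForm p u w = 0 := fun u hu => by
    have zmod_two_eq_zero_of_ne_one : ∀ t : ZMod 2, t ≠ 1 → t = 0 := by decide
    exact zmod_two_eq_zero_of_ne_one _ (h u hu)
  have hW := hV.2 _ ((isAlt_omegaForm p).isotropic_sup_span_singleton hV.1 hVw) le_sup_left
  exact hw (hW ▸ Submodule.mem_sup_right (Submodule.mem_span_singleton_self w))

section Pauli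

variable {p : ℕ}

lemma pauli_zero_zero : pauli (0 : Fin p → ZMod 2) 0 = 1 := by
  ext x y
  simp [pauli, one_apply, dotp_eq_dotProduct, sgn, eq_comm]

lemma pauli_mul_pauli (a b c d : Fin p → ZMod 2) :
    pauli a b * pauli c d = sgn (dotp a d) • pauli (a + c) (b + d) := by
  ext x z
  rw [mul_apply, Finset.sum_eq_single (x + a) (fun y _ hy => by simp [pauli, hy]) (by simp)]
  simp only [pauli, if_pos, Matrix.smul_apply, smul_eq_mul, ← add_assoc, mul_ite, mul_zero]
  congr 1
  simp only [← sgn_add, dotp_eq_dotProduct, dotProduct_add, add_dotProduct, dotProduct_comm a d]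
  ring_nf

lemma pauli_conjTranspose (a b : Fin p → ZMod 2) :
    (pauli a b)ᴴ = sgn (dotp a b) • pauli a b := by
  ext x y
  simp only [pauli, conjTranspose_apply, Matrix.smul_apply, apply_ite star, star_sgn, star_zero,
    smul_eq_mul, mul_ite, mul_zero, ← sgn_add]
  have hxy : x = y + a ↔ y = x + a := by
    constructor <;> rintro rfl <;> rw [add_assoc, ZModModule.add_self, add_zero]
  simp only [hxy]
  split_ifs with h
  · subst h
    simp only [dotp_eq_dotProduct, dotProduct_add, dotProduct_comm a b, add_comm]
  · rfl

lemma pauli_conjTranspose_mul_self (a b : Fin p → ZMod 2) : (pauli a b)ᴴ * pauli a b = 1 := by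
  rw [pauli_conjTranspose, smul_mul_assoc, pauli_mul_pauli, smul_smul, sgn_mul_self, one_smul,
    ZModModule.add_self, ZModModule.add_self, pauli_zero_zero]

lemma pauli_mul_pauli_comm (a b c d : Fin p → ZMod 2) :
    pauli a b * pauli c d = sgn (omegaF (a, b) (c, d)) • (pauli c d * pauli a b) := by
  rw [pauli_mul_pauli, pauli_mul_pauli, smul_smul, omegaF, sgn_add, dotp_eq_dotProduct b c,
    dotProduct_comm b c, ← dotp_eq_dotProduct, mul_assoc, sgn_mul_self, mul_one, add_comm c,
    add_comm d]

end Pauli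

theorem star_dotProduct_mulVec_eq_zero_of_anticommute {n K : Type*} [Fintype n]
    [DecidableEq n] [CommRing K] [StarRing K] [IsAddTorsionFree K] {U S : Matrix n n K}
    {ψ : n → K} (hU : Uᴴ * U = 1) (hUS : U * S = -(S * U)) (hψ : U *ᵥ ψ = ψ) :
    star ψ ⬝ᵥ (S *ᵥ ψ) = 0 := by
  have hSU : S * U = -(U * S) := by rw [hUS, neg_neg]
  rw [← self_eq_neg]
  calc star ψ ⬝ᵥ (S *ᵥ ψ) = star (U *ᵥ ψ) ⬝ᵥ (S *ᵥ (U *ᵥ ψ)) := by rw [hψ]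
    _ = star ψ ⬝ᵥ ((Uᴴ * (S * U)) *ᵥ ψ) := by
      rw [star_mulVec, ← dotProduct_mulVec, mulVec_mulVec, mulVec_mulVec, mul_assoc]
    _ = -(star ψ ⬝ᵥ (S *ᵥ ψ)) := by
      rw [hSU, mul_neg, ← mul_assoc, hU, one_mul, neg_mulVec, dotProduct_neg]

open scoped ComplexOrder

theorem inner_stabilizer_eq_zero_iff_general {p : ℕ}
    (V : Submodule (ZMod 2) ((Fin p → ZMod 2) × (Fin p → ZMod 2)))
    (hV : IsMaxIsotropic V) (ψ₀ : (Fin p → ZMod 2) → ℂ) (hψ₀ : ψ₀ ≠ 0)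
    (hstab : ∀ u ∈ V, (pauli u.1 u.2).mulVec ψ₀ = ψ₀)
    (c d : Fin p → ZMod 2) :
    (∑ x, (starRingEnd ℂ) (ψ₀ x) * (pauli c d).mulVec ψ₀ x) = 0 ↔ (c, d) ∉ V := by
  change star ψ₀ ⬝ᵥ (pauli c d *ᵥ ψ₀) = 0 ↔ _
  constructor
  · intro h hcd
    rw [hstab _ hcd] at h
    exact hψ₀ (dotProduct_star_self_eq_zero.1 h)
  · intro hcd
    obtain ⟨u, hu, hω⟩ := hV.exists_omegaF_eq_one hcd
    refine star_dotProduct_mulVec_eq_zero_of_anticommute (pauli_conjTranspose_mul_self u.1 u.2)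
      ?_ (hstab u hu)
    rw [pauli_mul_pauli_comm, hω, sgn_one, neg_one_smul]

/-- Paper's Lemma 4: For a stabilizer state `ψ₀` of a maximal isotropic
subspace `V`, the inner product `⟪ψ₀, σ(c,d).mulVec ψ₀⟫` vanishes iff `(c,d) ∉ V`:
the state `S ψ₀` is orthogonal to `ψ₀` iff the spinor `S` lies outside the Cartanion. -/
theorem inner_stabilizer_eq_zero_iff {p : ℕ} (hp : 1 ≤ p)
    (V : Submodule (ZMod 2) ((Fin p → ZMod 2) × (Fin p → ZMod 2)))
    (hV : IsMaxIsotropic V) (ψ₀ : (Fin p → ZMod 2) → ℂ) (hψ₀ : ψ₀ ≠ 0)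
    (hstab : ∀ u ∈ V, (pauli u.1 u.2).mulVec ψ₀ = ψ₀)
    (c d : Fin p → ZMod 2) :
    (∑ x, (starRingEnd ℂ) (ψ₀ x) * (pauli c d).mulVec ψ₀ x) = 0 ↔ (c, d) ∉ V :=
  inner_stabilizer_eq_zero_iff_general V hV ψ₀ hψ₀ hstab c d
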